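/- Let n ≥ 1 and let T be a finite collection of pairwise distinct stabilizer groups of n-qubit signed Pauli matrices with |T| ≥ 2. For S ∈ T write ρ_S := 2^{-n} Σ_{Q ∈ S} Q, and for S, S' ∈ T define the correlation c(S,S') := (1/(2·4^n)) · Σ_{(ε,a)} tr(P_{ε,a} · ρ_S) · tr(P_{ε,a} · ρ_{S'}), the sum over all pairs (ε,a) with ε ∈ {1,−1}, a : Fin n → Fin 4. Then the average absolute correlation satisfies (1/|T|²) · Σ_{S ∈ T} Σ_{S' ∈ T} |c(S,S')| ≤ 2^{-n}. (This is the content of the statement that the statistical dimension on average of the stabilizer states at threshold 2^{-n} under the uniform distribution on Pauli measurements is at least half the number of stabilizer states.) -/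

import Mathlib

/-!
Since `tr (P_a P_b) = 2^n δ_{ab}`, the expectation `tr (P_a ρ_S) = 2^{-n} Σ_{Q ∈ S} tr (P_a Q)` only
sees the elements `±P_a` of `S`, and `S` contains at most one of them because `P_a (-P_a) = -I ∉ S`.
Hence `|tr (P_a ρ_S)| ≤ 1` for every `a`, while `Σ_a |tr (P_a ρ_S)| ≤ |S| = 2^n`. The signs `ε`
enter the correlation only through `ε² = 1`, so `|c(S, S')| ≤ 4^{-n} Σ_a |tr (P_a ρ_S)| ≤ 2^{-n}`
for every pair, and the average obeys the same bound.
-/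

open Matrix

noncomputable section

/-- The four single-qubit Pauli matrices: `I₂`, `X`, `Y`, `Z`. -/
def pauli : Fin 4 → Matrix (Fin 2) (Fin 2) ℂ
  | 0 => 1
  | 1 => !![0, 1; 1, 0]
  | 2 => !![0, -Complex.I; Complex.I, 0]
  | 3 => !![1, 0; 0, -1]

/-- The `n`-fold Kronecker product `A_{a 0} ⊗ ⋯ ⊗ A_{a (n-1)}` of single-qubit Pauli
matrices, realized as a matrix indexed by bit strings. -/
def pauliTensor {n : ℕ} (a : Fin n → Fin 4) :
    Matrix (Fin n → Fin 2) (Fin n → Fin 2) ℂ :=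
  fun z w => ∏ i, pauli (a i) (z i) (w i)

/-- A signed `n`-qubit Pauli matrix: `ε • (A₁ ⊗ ⋯ ⊗ Aₙ)` with `ε ∈ {1, -1}`. -/
def IsSignedPauli {n : ℕ} (M : Matrix (Fin n → Fin 2) (Fin n → Fin 2) ℂ) : Prop :=
  ∃ (ε : ℂ) (a : Fin n → Fin 4), (ε = 1 ∨ ε = -1) ∧ M = ε • pauliTensor a

/-- A stabilizer group: a set of signed `n`-qubit Pauli matrices containing the identity,
closed under multiplication, pairwise commuting, not containing `-I`, of size `2^n`. -/
structure IsStabilizerGroup (n : ℕ)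
    (S : Set (Matrix (Fin n → Fin 2) (Fin n → Fin 2) ℂ)) : Prop where
  mem_pauli : ∀ M ∈ S, IsSignedPauli M
  one_mem : (1 : Matrix (Fin n → Fin 2) (Fin n → Fin 2) ℂ) ∈ S
  mul_mem : ∀ M ∈ S, ∀ N ∈ S, M * N ∈ S
  mul_comm : ∀ M ∈ S, ∀ N ∈ S, M * N = N * M
  neg_one_not_mem : -(1 : Matrix (Fin n → Fin 2) (Fin n → Fin 2) ℂ) ∉ S
  card_eq : S.ncard = 2 ^ n

/-- The stabilizer state associated to a stabilizer group: `ρ_S = 2^{-n} Σ_{Q ∈ S} Q`. -/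
def stabState {n : ℕ} (S : Set (Matrix (Fin n → Fin 2) (Fin n → Fin 2) ℂ)) :
    Matrix (Fin n → Fin 2) (Fin n → Fin 2) ℂ :=
  ((2 : ℂ) ^ n)⁻¹ • ∑ᶠ Q ∈ S, Q

lemma pauli_mul_self (i : Fin 4) : pauli i * pauli i = 1 := by
  fin_cases i <;> simp [pauli, Matrix.one_fin_two]

lemma trace_pauli_mul (i j : Fin 4) :
    (pauli i * pauli j).trace = if i = j then 2 else 0 := by
  fin_cases i <;> fin_cases j <;>
    simp [pauli, Matrix.trace_fin_two, Matrix.one_fin_two, Complex.I_mul_I] <;> norm_num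

section PauliTensor

variable {n : ℕ}

lemma pauliTensor_mul_apply (a b : Fin n → Fin 4) (z w : Fin n → Fin 2) :
    (pauliTensor a * pauliTensor b) z w = ∏ i, (pauli (a i) * pauli (b i)) (z i) (w i) := by
  simp only [Matrix.mul_apply, pauliTensor, Fintype.prod_sum, Finset.prod_mul_distrib]

lemma pauliTensor_mul_self (a : Fin n → Fin 4) : pauliTensor a * pauliTensor a = 1 := by
  ext z w
  simp only [pauliTensor_mul_apply, pauli_mul_self, Matrix.one_apply]
  by_cases h : z = w
  · simp [h]
  · obtain ⟨i, hi⟩ := Function.ne_iff.mp h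
    rw [if_neg h]
    exact Finset.prod_eq_zero (Finset.mem_univ i) (if_neg hi)

lemma trace_pauliTensor_mul (a b : Fin n → Fin 4) :
    (pauliTensor a * pauliTensor b).trace = if a = b then (2 : ℂ) ^ n else 0 := by
  have h_prod : (pauliTensor a * pauliTensor b).trace = ∏ i, (pauli (a i) * pauli (b i)).trace := by
    simp only [Matrix.trace, Matrix.diag, pauliTensor_mul_apply, Fintype.prod_sum]
  simp only [h_prod, trace_pauli_mul]
  by_cases h : a = b
  · simp [h]
  · obtain ⟨i, hi⟩ := Function.ne_iff.mp h
    rw [if_neg h]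
    exact Finset.prod_eq_zero (Finset.mem_univ i) (if_neg hi)

end PauliTensor

section SignedPauli

variable {n : ℕ} {M : Matrix (Fin n → Fin 2) (Fin n → Fin 2) ℂ}

lemma IsSignedPauli.mul_self (hM : IsSignedPauli M) : M * M = 1 := by
  obtain ⟨ε, a, hε, rfl⟩ := hM
  rw [smul_mul_smul_comm, pauliTensor_mul_self]
  rcases hε with rfl | rfl <;> simp

lemma IsSignedPauli.eq_or_eq_neg_of_trace_pauliTensor_mul_ne_zero (hM : IsSignedPauli M)
    {a : Fin n → Fin 4} (h : (pauliTensor a * M).trace ≠ 0) :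
    M = pauliTensor a ∨ M = -pauliTensor a := by
  obtain ⟨ε, b, hε, rfl⟩ := hM
  rw [Matrix.mul_smul, trace_smul, trace_pauliTensor_mul] at h
  obtain rfl : a = b := by_contra fun hab => h (by simp [hab])
  rcases hε with rfl | rfl <;> simp

lemma IsSignedPauli.sum_norm_trace_pauliTensor_mul (hM : IsSignedPauli M) :
    ∑ a, ‖(pauliTensor a * M).trace‖ = 2 ^ n := by
  obtain ⟨ε, b, hε, rfl⟩ := hM
  have hε_norm : ‖ε‖ = 1 := by rcases hε with rfl | rfl <;> simp
  simp [trace_pauliTensor_mul, hε_norm, apply_ite]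

lemma IsSignedPauli.norm_trace_pauliTensor_mul_le (hM : IsSignedPauli M) (a : Fin n → Fin 4) :
    ‖(pauliTensor a * M).trace‖ ≤ 2 ^ n := by
  rw [← hM.sum_norm_trace_pauliTensor_mul]
  exact Finset.single_le_sum (fun b _ => norm_nonneg (pauliTensor b * M).trace) (Finset.mem_univ a)

end SignedPauli

lemma stabState_eq_sum {n : ℕ} {S : Set (Matrix (Fin n → Fin 2) (Fin n → Fin 2) ℂ)}
    (hS : S.Finite) : stabState S = ((2 : ℂ) ^ n)⁻¹ • ∑ Q ∈ hS.toFinset, Q := by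
  rw [stabState, ← finsum_mem_coe_finset, hS.coe_toFinset]

lemma norm_trace_mul_stabState_le {n : ℕ} {S : Set (Matrix (Fin n → Fin 2) (Fin n → Fin 2) ℂ)}
    (hS : S.Finite) (A : Matrix (Fin n → Fin 2) (Fin n → Fin 2) ℂ) :
    ‖(A * stabState S).trace‖ ≤ ((2 : ℝ) ^ n)⁻¹ * ∑ Q ∈ hS.toFinset, ‖(A * Q).trace‖ := by
  rw [stabState_eq_sum hS, Matrix.mul_smul, trace_smul, Matrix.mul_sum, trace_sum, smul_eq_mul,
    norm_mul, norm_inv, norm_pow, Complex.norm_two]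
  gcongr
  exact norm_sum_le _ _

namespace IsStabilizerGroup

variable {n : ℕ} {S : Set (Matrix (Fin n → Fin 2) (Fin n → Fin 2) ℂ)}

lemma finite (hS : IsStabilizerGroup n S) : S.Finite :=
  Set.finite_of_ncard_ne_zero (by rw [hS.card_eq]; positivity)

lemma neg_notMem (hS : IsStabilizerGroup n S) {M : Matrix (Fin n → Fin 2) (Fin n → Fin 2) ℂ}
    (hM : M ∈ S) : -M ∉ S := fun hneg =>
  hS.neg_one_not_mem <| by
    simpa [(hS.mem_pauli M hM).mul_self] using hS.mul_mem M hM (-M) hneg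

lemma eq_of_trace_pauliTensor_mul_ne_zero (hS : IsStabilizerGroup n S) {a : Fin n → Fin 4}
    {M N : Matrix (Fin n → Fin 2) (Fin n → Fin 2) ℂ} (hM : M ∈ S) (hN : N ∈ S)
    (hMa : (pauliTensor a * M).trace ≠ 0) (hNa : (pauliTensor a * N).trace ≠ 0) : M = N := by
  rcases (hS.mem_pauli M hM).eq_or_eq_neg_of_trace_pauliTensor_mul_ne_zero hMa with rfl | rfl <;>
    rcases (hS.mem_pauli N hN).eq_or_eq_neg_of_trace_pauliTensor_mul_ne_zero hNa with rfl | rfl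
  · rfl
  · exact absurd hN (hS.neg_notMem hM)
  · exact absurd hM (hS.neg_notMem hN)
  · rfl

lemma sum_norm_trace_pauliTensor_mul_le (hS : IsStabilizerGroup n S) (a : Fin n → Fin 4) :
    ∑ Q ∈ hS.finite.toFinset, ‖(pauliTensor a * Q).trace‖ ≤ 2 ^ n := by
  classical
  rw [← Finset.sum_filter_ne_zero]
  set F := hS.finite.toFinset.filter fun Q => ‖(pauliTensor a * Q).trace‖ ≠ 0
  have hF : F.card ≤ 1 := Finset.card_le_one.mpr fun M hM N hN => by
    simp only [F, Finset.mem_filter, Set.Finite.mem_toFinset, norm_ne_zero_iff] at hM hN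
    exact hS.eq_of_trace_pauliTensor_mul_ne_zero hM.1 hN.1 hM.2 hN.2
  calc ∑ Q ∈ F, ‖(pauliTensor a * Q).trace‖
      ≤ F.card • (2 : ℝ) ^ n := Finset.sum_le_card_nsmul _ _ _ fun Q hQ =>
        (hS.mem_pauli Q (hS.finite.mem_toFinset.mp (Finset.mem_filter.mp hQ).1)).norm_trace_pauliTensor_mul_le a
    _ ≤ 1 • (2 : ℝ) ^ n := by gcongr
    _ = 2 ^ n := one_smul _ _

lemma norm_trace_pauliTensor_mul_stabState_le_one (hS : IsStabilizerGroup n S)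
    (a : Fin n → Fin 4) : ‖(pauliTensor a * stabState S).trace‖ ≤ 1 :=
  calc ‖(pauliTensor a * stabState S).trace‖
      ≤ ((2 : ℝ) ^ n)⁻¹ * ∑ Q ∈ hS.finite.toFinset, ‖(pauliTensor a * Q).trace‖ :=
        norm_trace_mul_stabState_le hS.finite _
    _ ≤ ((2 : ℝ) ^ n)⁻¹ * 2 ^ n := by gcongr; exact hS.sum_norm_trace_pauliTensor_mul_le a
    _ = 1 := inv_mul_cancel₀ (by positivity)

lemma sum_norm_trace_pauliTensor_mul_stabState_le (hS : IsStabilizerGroup n S) :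
    ∑ a, ‖(pauliTensor a * stabState S).trace‖ ≤ 2 ^ n := by
  have hcard : hS.finite.toFinset.card = 2 ^ n := by
    rw [← hS.card_eq, Set.ncard_eq_toFinset_card S hS.finite]
  calc ∑ a, ‖(pauliTensor a * stabState S).trace‖
      ≤ ∑ a, ((2 : ℝ) ^ n)⁻¹ * ∑ Q ∈ hS.finite.toFinset, ‖(pauliTensor a * Q).trace‖ :=
        Finset.sum_le_sum fun a _ => norm_trace_mul_stabState_le hS.finite _
    _ = ((2 : ℝ) ^ n)⁻¹ * ∑ Q ∈ hS.finite.toFinset, ∑ a, ‖(pauliTensor a * Q).trace‖ := by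
        rw [← Finset.mul_sum, Finset.sum_comm]
    _ = ((2 : ℝ) ^ n)⁻¹ * ∑ Q ∈ hS.finite.toFinset, (2 : ℝ) ^ n := by
        congr 1
        exact Finset.sum_congr rfl fun Q hQ =>
          (hS.mem_pauli Q (hS.finite.mem_toFinset.mp hQ)).sum_norm_trace_pauliTensor_mul
    _ = 2 ^ n := by
        rw [Finset.sum_const, hcard, nsmul_eq_mul]
        push_cast
        field_simp

end IsStabilizerGroup

section Correlation

variable {n : ℕ}

def pauliCorrelation (ρ σ : Matrix (Fin n → Fin 2) (Fin n → Fin 2) ℂ) : ℂ :=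
  (1 / (2 * 4 ^ n) : ℂ) *
    ∑ ε ∈ ({1, -1} : Finset ℂ), ∑ a : Fin n → Fin 4,
      ((ε • pauliTensor a) * ρ).trace * ((ε • pauliTensor a) * σ).trace

lemma pauliCorrelation_eq (ρ σ : Matrix (Fin n → Fin 2) (Fin n → Fin 2) ℂ) :
    pauliCorrelation ρ σ =
      ((4 : ℂ) ^ n)⁻¹ * ∑ a, (pauliTensor a * ρ).trace * (pauliTensor a * σ).trace := by
  simp only [pauliCorrelation, Matrix.smul_mul, trace_smul, smul_eq_mul]
  rw [Finset.sum_pair (by norm_num)]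
  simp only [one_mul, neg_one_mul, neg_mul_neg]
  ring

lemma norm_pauliCorrelation_le {ρ σ : Matrix (Fin n → Fin 2) (Fin n → Fin 2) ℂ}
    (hρ : ∑ a, ‖(pauliTensor a * ρ).trace‖ ≤ 2 ^ n) (hσ : ∀ a, ‖(pauliTensor a * σ).trace‖ ≤ 1) :
    ‖pauliCorrelation ρ σ‖ ≤ ((2 : ℝ) ^ n)⁻¹ := by
  have h_sum : ‖∑ a, (pauliTensor a * ρ).trace * (pauliTensor a * σ).trace‖ ≤ 2 ^ n :=
    calc ‖∑ a, (pauliTensor a * ρ).trace * (pauliTensor a * σ).trace‖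
        ≤ ∑ a, ‖(pauliTensor a * ρ).trace‖ * ‖(pauliTensor a * σ).trace‖ :=
          norm_sum_le_of_le _ fun a _ => (norm_mul _ _).le
      _ ≤ ∑ a, ‖(pauliTensor a * ρ).trace‖ := by
          gcongr with a
          exact mul_le_of_le_one_right (norm_nonneg _) (hσ a)
      _ ≤ 2 ^ n := hρ
  calc ‖pauliCorrelation ρ σ‖
      = ((4 : ℝ) ^ n)⁻¹ * ‖∑ a, (pauliTensor a * ρ).trace * (pauliTensor a * σ).trace‖ := by
        rw [pauliCorrelation_eq, norm_mul, norm_inv, norm_pow, Complex.norm_ofNat]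
    _ ≤ ((4 : ℝ) ^ n)⁻¹ * 2 ^ n := by gcongr
    _ = ((2 : ℝ) ^ n)⁻¹ := by
        rw [show (4 : ℝ) ^ n = 2 ^ n * 2 ^ n by rw [← mul_pow]; norm_num]
        field_simp

end Correlation

lemma one_div_card_sq_mul_sum_sum_le {ι : Type*} (s : Finset ι) {f : ι → ι → ℝ} {b : ℝ}
    (hb : 0 ≤ b) (hf : ∀ i ∈ s, ∀ j ∈ s, f i j ≤ b) :
    1 / (s.card : ℝ) ^ 2 * ∑ i ∈ s, ∑ j ∈ s, f i j ≤ b := by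
  rcases s.eq_empty_or_nonempty with rfl | hs
  · simpa using hb
  calc 1 / (s.card : ℝ) ^ 2 * ∑ i ∈ s, ∑ j ∈ s, f i j
      ≤ 1 / (s.card : ℝ) ^ 2 * ∑ i ∈ s, ∑ j ∈ s, b := by
        gcongr with i hi j hj
        exact hf i hi j hj
    _ = b := by
        have : (s.card : ℝ) ≠ 0 := by exact_mod_cast hs.card_pos.ne'
        simp only [Finset.sum_const, nsmul_eq_mul]
        field_simp

theorem stabState_average_correlation_general {n : ℕ}
    (T : Finset (Set (Matrix (Fin n → Fin 2) (Fin n → Fin 2) ℂ)))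
    (hT : ∀ S ∈ T, IsStabilizerGroup n S) :
    (1 / (T.card : ℝ) ^ 2) *
        ∑ S ∈ T, ∑ S' ∈ T,
          ‖(1 / (2 * 4 ^ n) : ℂ) *
              ∑ ε ∈ ({1, -1} : Finset ℂ), ∑ a : Fin n → Fin 4,
                ((ε • pauliTensor a) * stabState S).trace *
                  ((ε • pauliTensor a) * stabState S').trace‖ ≤
      ((2 : ℝ) ^ n)⁻¹ :=
  one_div_card_sq_mul_sum_sum_le T (by positivity) fun S hS S' hS' =>
    norm_pauliCorrelation_le (hT S hS).sum_norm_trace_pauliTensor_mul_stabState_le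
      (hT S' hS').norm_trace_pauliTensor_mul_stabState_le_one

/-- The average absolute correlation of any collection of at least two distinct stabilizer
states, under the uniform distribution on Pauli measurements, is at most `2^{-n}`. -/
theorem stabState_average_correlation {n : ℕ} (hn : 1 ≤ n)
    (T : Finset (Set (Matrix (Fin n → Fin 2) (Fin n → Fin 2) ℂ)))
    (hT : ∀ S ∈ T, IsStabilizerGroup n S) (hcard : 2 ≤ T.card) :
    (1 / (T.card : ℝ) ^ 2) *
        ∑ S ∈ T, ∑ S' ∈ T,
          ‖(1 / (2 * 4 ^ n) : ℂ) *
              ∑ ε ∈ ({1, -1} : Finset ℂ), ∑ a : Fin n → Fin 4,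
                ((ε • pauliTensor a) * stabState S).trace *
                  ((ε • pauliTensor a) * stabState S').trace‖ ≤
      ((2 : ℝ) ^ n)⁻¹ :=
  stabState_average_correlation_general T hT
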